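/- Per-block coercivity of the Bellman-error loss under full column rank. Fix d ∈ {1, …, D} and factor matrices Q_{d'} for all d' ≠ d, and suppose the columns of the coefficient matrix C̄_d corresponding to the free entries of the d-th factor (all columns when d < D; the columns (j, k) with j ∈ {1, …, H} when d = D) are linearly independent. Then the map X ↦ L(Q_1, …, Q_{d−1}, X, Q_{d+1}, …, Q_D) is coercive in the free entries of X: for every sequence of admissible matrices X_n with ‖X_n‖_F → ∞, one has L(Q_1, …, X_n, …, Q_D) → ∞; equivalently, all its sublevel sets are bounded. -/

import Mathlib

/-!
With every factor but the `d`-th fixed, the PARAFAC tensor is linear in `Q_d`, so the Bellman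
error is affine in it: `δ = R + C̄_d x`, where `x` collects the free entries of `Q_d` (the others
vanish for admissible matrices, so `‖x‖ = ‖Q_d‖_F`). Hence `L = ‖R + C̄_d x‖² / H`. Full column
rank makes `x ↦ C̄_d x` injective, hence antilipschitz on the finite-dimensional space of free
entries, so `‖R + C̄_d x‖ ≥ c ‖x‖ - ‖R‖` is unbounded along `X_n`.
-/

namespace FHMDP

noncomputable section

/-- Mode index set `{1, …, D}` with `D = Ds + Da + 1`: state modes, action modes,
and a final time mode. -/
abbrev Mode (Ds Da : ℕ) : Type := Fin Ds ⊕ Fin Da ⊕ Unit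

/-- The last (time) mode `d = D`. -/
abbrev tmode (Ds Da : ℕ) : Mode Ds Da := Sum.inr (Sum.inr ())

/-- The index set `D_d` of each mode. -/
def Dset {Ds Da : ℕ} (Sset : Fin Ds → Type) (Aset : Fin Da → Type) (H : ℕ) :
    Mode Ds Da → Type
  | Sum.inl i => Sset i
  | Sum.inr (Sum.inl j) => Aset j
  | Sum.inr (Sum.inr _) => Fin (H + 1)

instance {Ds Da : ℕ} {Sset : Fin Ds → Type} {Aset : Fin Da → Type} {H : ℕ}
    [∀ i, Fintype (Sset i)] [∀ j, Fintype (Aset j)] :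
    ∀ m : Mode Ds Da, Fintype (Dset Sset Aset H m)
  | Sum.inl i => inferInstanceAs (Fintype (Sset i))
  | Sum.inr (Sum.inl j) => inferInstanceAs (Fintype (Aset j))
  | Sum.inr (Sum.inr _) => inferInstanceAs (Fintype (Fin (H + 1)))

instance {Ds Da : ℕ} {Sset : Fin Ds → Type} {Aset : Fin Da → Type} {H : ℕ}
    [∀ i, DecidableEq (Sset i)] [∀ j, DecidableEq (Aset j)] :
    ∀ m : Mode Ds Da, DecidableEq (Dset Sset Aset H m)
  | Sum.inl i => inferInstanceAs (DecidableEq (Sset i))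
  | Sum.inr (Sum.inl j) => inferInstanceAs (DecidableEq (Aset j))
  | Sum.inr (Sum.inr _) => inferInstanceAs (DecidableEq (Fin (H + 1)))

/-- The multi-index `ι(s, a, h)` of a state-action-time triplet. -/
def idx {Ds Da : ℕ} {Sset : Fin Ds → Type} {Aset : Fin Da → Type} {H : ℕ}
    (s : ∀ i, Sset i) (a : ∀ j, Aset j) (h : Fin (H + 1)) :
    ∀ m : Mode Ds Da, Dset Sset Aset H m
  | Sum.inl i => s i
  | Sum.inr (Sum.inl j) => a j
  | Sum.inr (Sum.inr _) => h

/-- A factor collection `Q = (Q_1, …, Q_D)`. -/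
abbrev Fac {Ds Da : ℕ} (Sset : Fin Ds → Type) (Aset : Fin Da → Type) (H K : ℕ) : Type :=
  ∀ m : Mode Ds Da, Matrix (Dset Sset Aset H m) (Fin K) ℝ

/-- The entry `[[Q]](s, a, h)` of the PARAFAC tensor of a factor collection. -/
def parafac {Ds Da H K : ℕ} {Sset : Fin Ds → Type} {Aset : Fin Da → Type}
    (Q : Fac Sset Aset H K) (s : ∀ i, Sset i) (a : ∀ j, Aset j) (h : Fin (H + 1)) : ℝ :=
  ∑ k : Fin K, ∏ m : Mode Ds Da, Q m (idx s a h m) k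

/-- The Bellman error `δ_Q(s, a, h)` for `h ∈ {1, …, H}` (zero-indexed `h : Fin H`). -/
def bellErr {Ds Da H K : ℕ} {Sset : Fin Ds → Type} {Aset : Fin Da → Type}
    [∀ i, Fintype (Sset i)]
    (P : (∀ i, Sset i) → (∀ j, Aset j) → (∀ i, Sset i) → ℝ)
    (R : (∀ i, Sset i) → (∀ j, Aset j) → ℝ)
    (π : Fin (H + 1) → (∀ i, Sset i) → (∀ j, Aset j))
    (Q : Fac Sset Aset H K) (s : ∀ i, Sset i) (a : ∀ j, Aset j) (h : Fin H) : ℝ :=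
  R s a + (∑ s' : ∀ i, Sset i, P s a s' * parafac Q s' (π h.succ s') h.succ)
    - parafac Q s a h.castSucc

/-- The Bellman-error loss `L(Q)`. -/
def Loss {Ds Da H K : ℕ} {Sset : Fin Ds → Type} {Aset : Fin Da → Type}
    [∀ i, Fintype (Sset i)] [∀ j, Fintype (Aset j)]
    (P : (∀ i, Sset i) → (∀ j, Aset j) → (∀ i, Sset i) → ℝ)
    (R : (∀ i, Sset i) → (∀ j, Aset j) → ℝ)
    (π : Fin (H + 1) → (∀ i, Sset i) → (∀ j, Aset j))
    (Q : Fac Sset Aset H K) : ℝ :=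
  (1 / (H : ℝ)) * ∑ h : Fin H, ∑ s : ∀ i, Sset i, ∑ a : ∀ j, Aset j,
    (bellErr P R π Q s a h) ^ 2

/-- `Φ^Q_d[(s, a, h), (j, k)]`. -/
def Phi {Ds Da H K : ℕ} {Sset : Fin Ds → Type} {Aset : Fin Da → Type}
    [∀ i, DecidableEq (Sset i)] [∀ j, DecidableEq (Aset j)]
    (Q : Fac Sset Aset H K) (d : Mode Ds Da)
    (s : ∀ i, Sset i) (a : ∀ j, Aset j) (h : Fin (H + 1))
    (j : Dset Sset Aset H d) (k : Fin K) : ℝ :=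
  (if idx s a h d = j then (1 : ℝ) else 0) *
    ∏ m ∈ Finset.univ.erase d, Q m (idx s a h m) k

/-- The coefficient matrix `C̄_d[(s, a, h), (j, k)]` (independent of the `d`-th factor). -/
def Cbar {Ds Da H K : ℕ} {Sset : Fin Ds → Type} {Aset : Fin Da → Type}
    [∀ i, Fintype (Sset i)] [∀ i, DecidableEq (Sset i)] [∀ j, DecidableEq (Aset j)]
    (P : (∀ i, Sset i) → (∀ j, Aset j) → (∀ i, Sset i) → ℝ)
    (π : Fin (H + 1) → (∀ i, Sset i) → (∀ j, Aset j))
    (Q : Fac Sset Aset H K) (d : Mode Ds Da)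
    (s : ∀ i, Sset i) (a : ∀ j, Aset j) (h : Fin H)
    (j : Dset Sset Aset H d) (k : Fin K) : ℝ :=
  (∑ s' : ∀ i, Sset i, P s a s' * Phi Q d s' (π h.succ s') h.succ j k)
    - Phi Q d s a h.castSucc j k

/-- Free row indices of the `d`-th factor: every row for `d < D`, and all rows except
the last (time step `H+1`) for the time mode `d = D`. -/
def FreeIdx {Ds Da : ℕ} {Sset : Fin Ds → Type} {Aset : Fin Da → Type} {H : ℕ} :
    ∀ d : Mode Ds Da, Dset Sset Aset H d → Prop
  | Sum.inl _, _ => True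
  | Sum.inr (Sum.inl _), _ => True
  | Sum.inr (Sum.inr _), j => j ≠ Fin.last H

/-- A matrix for the `d`-th block is admissible when its non-free entries vanish. -/
def Adm {Ds Da : ℕ} {Sset : Fin Ds → Type} {Aset : Fin Da → Type} {H K : ℕ}
    (d : Mode Ds Da) (X : Matrix (Dset Sset Aset H d) (Fin K) ℝ) : Prop :=
  ∀ j k, ¬ FreeIdx d j → X j k = 0

/-- Frobenius norm. -/
def frob {α : Type*} [Fintype α] {K : ℕ} (A : Matrix α (Fin K) ℝ) : ℝ :=
  Real.sqrt (∑ i, ∑ k, (A i k) ^ 2)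

/-- Position of a mode in the block order `d = 1, …, D`. -/
def modeRank {Ds Da : ℕ} : Mode Ds Da → ℕ
  | Sum.inl i => i.val
  | Sum.inr (Sum.inl j) => Ds + j.val
  | Sum.inr (Sum.inr _) => Ds + Da

/-- Partial iterate: blocks strictly before `d` take their new values, block `d` takes
`X`, and blocks after `d` take their old values. -/
def mixAt {Ds Da : ℕ} {Sset : Fin Ds → Type} {Aset : Fin Da → Type} {H K : ℕ}
    (Qnew Qold : Fac Sset Aset H K) (d : Mode Ds Da)
    (X : Matrix (Dset Sset Aset H d) (Fin K) ℝ) : Fac Sset Aset H K :=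
  Function.update (fun m' => if modeRank m' < modeRank d then Qnew m' else Qold m') d X

open Filter Function

theorem _root_.LinearMap.tendsto_norm_add_apply_atTop {𝕜 E F α : Type*}
    [NontriviallyNormedField 𝕜] [CompleteSpace 𝕜] [NormedAddCommGroup E] [NormedSpace 𝕜 E]
    [FiniteDimensional 𝕜 E] [NormedAddCommGroup F] [NormedSpace 𝕜 F] {T : E →ₗ[𝕜] F}
    (hT : Injective T) (b : F) {l : Filter α} {u : α → E}
    (hu : Tendsto (fun x => ‖u x‖) l atTop) :
    Tendsto (fun x => ‖b + T (u x)‖) l atTop := by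
  obtain ⟨K, -, hK⟩ := T.injective_iff_antilipschitz.mp hT
  rw [tendsto_norm_atTop_iff_cobounded] at hu ⊢
  exact (tendsto_const_add_cobounded b).comp (hK.tendsto_cobounded.comp hu)

theorem _root_.Fintype.sum_subtype_of_eq_zero {ι M : Type*} [Fintype ι] [AddCommMonoid M]
    {p : ι → Prop} [DecidablePred p] {f : ι → M} (hf : ∀ i, ¬p i → f i = 0) :
    ∑ i : {i // p i}, f i = ∑ i, f i := by
  rw [← Fintype.sum_subtype_add_sum_subtype p f,
    Fintype.sum_eq_zero (fun i : {i // ¬p i} => f i) fun i => hf i i.2, add_zero]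

theorem _root_.Matrix.toEuclideanLin_injective {𝕜 m n : Type*} [RCLike 𝕜] [Fintype n]
    [DecidableEq n] {M : Matrix m n 𝕜} (hM : Injective M.mulVec) :
    Injective (Matrix.toEuclideanLin M) :=
  fun _ _ hvw => WithLp.ofLp_injective 2 (hM (congrArg WithLp.ofLp hvw))

section Coercivity

variable {Ds Da H K : ℕ} {Sset : Fin Ds → Type} {Aset : Fin Da → Type}

theorem parafac_update [∀ i, Fintype (Sset i)] [∀ i, DecidableEq (Sset i)]
    [∀ j, Fintype (Aset j)] [∀ j, DecidableEq (Aset j)]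
    (Q : Fac Sset Aset H K) (d : Mode Ds Da) (Y : Matrix (Dset Sset Aset H d) (Fin K) ℝ)
    (s : ∀ i, Sset i) (a : ∀ j, Aset j) (h : Fin (H + 1)) :
    parafac (update Q d Y) s a h =
      ∑ q : Dset Sset Aset H d × Fin K, Phi Q d s a h q.1 q.2 * Y q.1 q.2 := by
  rw [Fintype.sum_prod_type, Finset.sum_comm]
  refine Finset.sum_congr rfl fun k _ => ?_
  simp only [Phi, ite_mul, one_mul, zero_mul, Finset.sum_ite_eq, Finset.mem_univ, if_true]
  rw [← Finset.mul_prod_erase _ _ (Finset.mem_univ d), update_self, mul_comm]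
  congr 1
  exact Finset.prod_congr rfl fun m hm => by rw [update_of_ne (Finset.ne_of_mem_erase hm)]

theorem bellErr_update [∀ i, Fintype (Sset i)] [∀ i, DecidableEq (Sset i)]
    [∀ j, Fintype (Aset j)] [∀ j, DecidableEq (Aset j)]
    (P : (∀ i, Sset i) → (∀ j, Aset j) → (∀ i, Sset i) → ℝ)
    (R : (∀ i, Sset i) → (∀ j, Aset j) → ℝ) (π : Fin (H + 1) → (∀ i, Sset i) → (∀ j, Aset j))
    (Q : Fac Sset Aset H K) (d : Mode Ds Da) (Y : Matrix (Dset Sset Aset H d) (Fin K) ℝ)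
    (s : ∀ i, Sset i) (a : ∀ j, Aset j) (h : Fin H) :
    bellErr P R π (update Q d Y) s a h =
      R s a + ∑ q : Dset Sset Aset H d × Fin K, Cbar P π Q d s a h q.1 q.2 * Y q.1 q.2 := by
  simp only [bellErr, parafac_update, Cbar, sub_mul, Finset.sum_mul, Finset.mul_sum,
    Finset.sum_sub_distrib, mul_assoc, add_sub_assoc]
  rw [Finset.sum_comm]

abbrev FreeEntry (Sset : Fin Ds → Type) (Aset : Fin Da → Type) (H K : ℕ) (d : Mode Ds Da) :
    Type :=
  {jk : Dset Sset Aset H d × Fin K // FreeIdx d jk.1}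

instance (d : Mode Ds Da) : DecidablePred (FreeIdx (Sset := Sset) (Aset := Aset) (H := H) d) :=
  match d with
  | Sum.inl _ => fun _ => inferInstanceAs (Decidable True)
  | Sum.inr (Sum.inl _) => fun _ => inferInstanceAs (Decidable True)
  | Sum.inr (Sum.inr _) => fun (j : Fin (H + 1)) => inferInstanceAs (Decidable (j ≠ Fin.last H))

def freePart {d : Mode Ds Da} (Y : Matrix (Dset Sset Aset H d) (Fin K) ℝ) :
    EuclideanSpace ℝ (FreeEntry Sset Aset H K d) :=
  WithLp.toLp 2 fun p => Y p.1.1 p.1.2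

def cbarMatrix [∀ i, Fintype (Sset i)] [∀ i, DecidableEq (Sset i)] [∀ j, DecidableEq (Aset j)]
    (P : (∀ i, Sset i) → (∀ j, Aset j) → (∀ i, Sset i) → ℝ)
    (π : Fin (H + 1) → (∀ i, Sset i) → (∀ j, Aset j)) (Q : Fac Sset Aset H K) (d : Mode Ds Da) :
    Matrix (((∀ i, Sset i) × (∀ j, Aset j)) × Fin H) (FreeEntry Sset Aset H K d) ℝ :=
  Matrix.of fun row p => Cbar P π Q d row.1.1 row.1.2 row.2 p.1.1 p.1.2

theorem sum_freeEntry_of_adm [∀ i, Fintype (Sset i)] [∀ j, Fintype (Aset j)] {d : Mode Ds Da}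
    {Y : Matrix (Dset Sset Aset H d) (Fin K) ℝ} (hY : Adm d Y)
    {f : Dset Sset Aset H d × Fin K → ℝ} (hf : ∀ q, Y q.1 q.2 = 0 → f q = 0) :
    ∑ p : FreeEntry Sset Aset H K d, f p.1 = ∑ q, f q :=
  Fintype.sum_subtype_of_eq_zero fun q hq => hf q (hY q.1 q.2 hq)

theorem frob_eq_norm_freePart [∀ i, Fintype (Sset i)] [∀ j, Fintype (Aset j)]
    {d : Mode Ds Da} {Y : Matrix (Dset Sset Aset H d) (Fin K) ℝ} (hY : Adm d Y) :
    frob Y = ‖freePart Y‖ := by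
  rw [frob, EuclideanSpace.norm_eq, ← Fintype.sum_prod_type',
    ← sum_freeEntry_of_adm hY (f := fun q => Y q.1 q.2 ^ 2) fun q hq => by simp [hq]]
  simp [freePart]

theorem loss_update_eq [∀ i, Fintype (Sset i)] [∀ i, DecidableEq (Sset i)]
    [∀ j, Fintype (Aset j)] [∀ j, DecidableEq (Aset j)]
    (P : (∀ i, Sset i) → (∀ j, Aset j) → (∀ i, Sset i) → ℝ)
    (R : (∀ i, Sset i) → (∀ j, Aset j) → ℝ) (π : Fin (H + 1) → (∀ i, Sset i) → (∀ j, Aset j))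
    (Q : Fac Sset Aset H K) {d : Mode Ds Da} {Y : Matrix (Dset Sset Aset H d) (Fin K) ℝ}
    (hY : Adm d Y) :
    Loss P R π (update Q d Y) = 1 / (H : ℝ) *
      ‖WithLp.toLp 2 (fun row : ((∀ i, Sset i) × (∀ j, Aset j)) × Fin H => R row.1.1 row.1.2) +
        Matrix.toEuclideanLin (cbarMatrix P π Q d) (freePart Y)‖ ^ 2 := by
  rw [Loss, EuclideanSpace.real_norm_sq_eq, Fintype.sum_prod_type_right]
  congr 1
  refine Finset.sum_congr rfl fun h _ => ?_
  rw [Fintype.sum_prod_type]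
  refine Finset.sum_congr rfl fun s _ => Finset.sum_congr rfl fun a _ => ?_
  rw [bellErr_update, ← sum_freeEntry_of_adm hY fun q hq => by simp [hq]]
  rfl

end Coercivity

theorem per_block_coercivity_of_loss_general
    {Ds Da H K : ℕ} {Sset : Fin Ds → Type} {Aset : Fin Da → Type}
    [∀ i, Fintype (Sset i)] [∀ i, DecidableEq (Sset i)]
    [∀ j, Fintype (Aset j)] [∀ j, DecidableEq (Aset j)]
    (hH : 1 ≤ H)
    (P : (∀ i, Sset i) → (∀ j, Aset j) → (∀ i, Sset i) → ℝ)
    (R : (∀ i, Sset i) → (∀ j, Aset j) → ℝ)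
    (π : Fin (H + 1) → (∀ i, Sset i) → (∀ j, Aset j))
    (Q : Fac Sset Aset H K)
    (d : Mode Ds Da)
    (hfullrank :
      LinearIndependent ℝ
        (fun p : {jk : Dset Sset Aset H d × Fin K // FreeIdx d jk.1} =>
          fun row : ((∀ i, Sset i) × (∀ j, Aset j)) × Fin H =>
            Cbar P π Q d row.1.1 row.1.2 row.2 p.1.1 p.1.2))
    (X : ℕ → Matrix (Dset Sset Aset H d) (Fin K) ℝ)
    (hXadm : ∀ n, Adm d (X n))
    (hXnorm : Filter.Tendsto (fun n => frob (X n)) Filter.atTop Filter.atTop) :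
    Filter.Tendsto (fun n => Loss P R π (Function.update Q d (X n)))
      Filter.atTop Filter.atTop := by
  have hinj : Injective (Matrix.toEuclideanLin (cbarMatrix P π Q d)) :=
    Matrix.toEuclideanLin_injective (Matrix.mulVec_injective_iff.mpr hfullrank)
  have hfree : Tendsto (fun n => ‖freePart (X n)‖) atTop atTop :=
    hXnorm.congr fun n => frob_eq_norm_freePart (hXadm n)
  have hHinv : (0 : ℝ) < 1 / H := by positivity
  simp only [loss_update_eq P R π Q (hXadm _)]
  exact ((tendsto_pow_atTop two_ne_zero).comp
    (LinearMap.tendsto_norm_add_apply_atTop hinj _ hfree)).const_mul_atTop hHinv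

/-- **Per-block coercivity of the Bellman-error loss under full column rank**: if the
columns of `C̄_d` corresponding to the free entries of the `d`-th factor are linearly
independent, then the map `X ↦ L(Q_1, …, X, …, Q_D)` is coercive in the free entries:
along any sequence of admissible matrices whose Frobenius norm tends to infinity, the
loss tends to infinity. -/
theorem per_block_coercivity_of_loss
    {Ds Da H K : ℕ} {Sset : Fin Ds → Type} {Aset : Fin Da → Type}
    [∀ i, Fintype (Sset i)] [∀ i, DecidableEq (Sset i)]
    [∀ j, Fintype (Aset j)] [∀ j, DecidableEq (Aset j)]
    (hH : 1 ≤ H) (hK : 1 ≤ K)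
    (P : (∀ i, Sset i) → (∀ j, Aset j) → (∀ i, Sset i) → ℝ)
    (hP0 : ∀ s a s', 0 ≤ P s a s') (hP1 : ∀ s a, ∑ s', P s a s' = 1)
    (R : (∀ i, Sset i) → (∀ j, Aset j) → ℝ)
    (π : Fin (H + 1) → (∀ i, Sset i) → (∀ j, Aset j))
    (Q : Fac Sset Aset H K)
    (hQ : ∀ k, Q (tmode Ds Da) (Fin.last H) k = 0)
    (d : Mode Ds Da)
    (hfullrank :
      LinearIndependent ℝ
        (fun p : {jk : Dset Sset Aset H d × Fin K // FreeIdx d jk.1} =>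
          fun row : ((∀ i, Sset i) × (∀ j, Aset j)) × Fin H =>
            Cbar P π Q d row.1.1 row.1.2 row.2 p.1.1 p.1.2))
    (X : ℕ → Matrix (Dset Sset Aset H d) (Fin K) ℝ)
    (hXadm : ∀ n, Adm d (X n))
    (hXnorm : Filter.Tendsto (fun n => frob (X n)) Filter.atTop Filter.atTop) :
    Filter.Tendsto (fun n => Loss P R π (Function.update Q d (X n)))
      Filter.atTop Filter.atTop :=
  per_block_coercivity_of_loss_general hH P R π Q d hfullrank X hXadm hXnorm

end

end FHMDP
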